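/- arXiv:2008.03899 — 9 statements merged into one kernel-verified Lean document; each statement's English description precedes it below -/
import Mathlib

section
/- Let a > 0 and let φ : [0,∞) → ℝ be differentiable with φ(t) > 0, φ'(t) ≥ 0, and φ'(t) ≤ a·φ(t) for all t ≥ 0. Then for every T > 0: 2·∫₀^T (T−t)·φ(t) dt ≤ (a + 3/T)·∫₀^T (T−t)²·φ(t) dt. -/
/-!
Integrating `(T - t)² φ' ≤ a (T - t)² φ` by parts gives
`2 ∫₀ᵀ (T - t) φ ≤ T² φ 0 + a ∫₀ᵀ (T - t)² φ`. Since `φ` is nondecreasing,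
`∫₀ᵀ (T - t)² φ ≥ φ 0 · T³ / 3`, so the boundary term `T² φ 0` is absorbed by
`(3 / T) ∫₀ᵀ (T - t)² φ`.
-/

open MeasureTheory intervalIntegral Set

theorem two_mul_integral_sub_mul_le_of_deriv_le {a T : ℝ} {φ φ' : ℝ → ℝ} (hT : 0 ≤ T)
    (hderiv : ∀ t ∈ Icc 0 T, HasDerivAt φ (φ' t) t) (hle : ∀ t ∈ Icc 0 T, φ' t ≤ a * φ t) :
    2 * ∫ t in (0 : ℝ)..T, (T - t) * φ t ≤
      T ^ 2 * φ 0 + a * ∫ t in (0 : ℝ)..T, (T - t) ^ 2 * φ t := by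
  have hcont : ContinuousOn φ (Icc 0 T) := fun t ht => (hderiv t ht).continuousAt.continuousWithinAt
  have hint₁ : IntervalIntegrable (fun t => (T - t) * φ t) volume 0 T :=
    (by fun_prop : ContinuousOn _ _).intervalIntegrable_of_Icc hT
  have hint₂ : IntervalIntegrable (fun t => (T - t) ^ 2 * φ t) volume 0 T :=
    (by fun_prop : ContinuousOn _ _).intervalIntegrable_of_Icc hT
  have hweight (t : ℝ) : HasDerivAt (fun t => (T - t) ^ 2) (-(2 * (T - t))) t :=
    (((hasDerivAt_id' t).const_sub T).fun_pow 2).congr_deriv (by push_cast; ring)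
  -- Integration by parts in the form of a one-sided FTC for `(T - t)² φ t`, which needs no
  -- integrability of `φ'`.
  have key := sub_le_integral_of_hasDeriv_right_of_le (g := fun t => (T - t) ^ 2 * φ t)
    (φ := fun t => a * ((T - t) ^ 2 * φ t) - 2 * ((T - t) * φ t)) hT (by fun_prop)
    (fun t ht => ((hweight t).mul (hderiv t (Ioo_subset_Icc_self ht))).hasDerivWithinAt)
    (by fun_prop : ContinuousOn _ _).integrableOn_Icc (fun t ht => by
      have := mul_le_mul_of_nonneg_left (hle t (Ioo_subset_Icc_self ht)) (sq_nonneg (T - t))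
      linarith)
  rw [integral_sub (hint₂.const_mul a) (hint₁.const_mul 2), intervalIntegral.integral_const_mul,
    intervalIntegral.integral_const_mul] at key
  simp only [sub_self, sub_zero] at key
  linarith

theorem le_integral_sub_sq_mul_of_monotoneOn {T : ℝ} {φ : ℝ → ℝ} (hT : 0 ≤ T)
    (hφ : MonotoneOn φ (Icc 0 T)) :
    φ 0 * T ^ 3 / 3 ≤ ∫ t in (0 : ℝ)..T, (T - t) ^ 2 * φ t := by
  have hφint : IntervalIntegrable φ volume 0 T := (uIcc_of_le hT ▸ hφ).intervalIntegrable
  calc φ 0 * T ^ 3 / 3 = ∫ t in (0 : ℝ)..T, (T - t) ^ 2 * φ 0 := by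
        rw [intervalIntegral.integral_mul_const,
          intervalIntegral.integral_comp_sub_left (fun t => t ^ 2) T]
        norm_num [integral_pow]; ring
    _ ≤ ∫ t in (0 : ℝ)..T, (T - t) ^ 2 * φ t := by
        refine integral_mono_on hT (Continuous.intervalIntegrable (by fun_prop) _ _)
          (hφint.continuousOn_mul (by fun_prop)) fun t ht => ?_
        exact mul_le_mul_of_nonneg_left (hφ ⟨le_rfl, hT⟩ ht ht.1) (sq_nonneg _)

theorem stmt_5_general (a : ℝ) (φ φ' : ℝ → ℝ)
    (hderiv : ∀ t : ℝ, 0 ≤ t → HasDerivAt φ (φ' t) t)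
    (hmono : ∀ t : ℝ, 0 ≤ t → 0 ≤ φ' t)
    (hle : ∀ t : ℝ, 0 ≤ t → φ' t ≤ a * φ t) :
    ∀ T : ℝ, 0 < T →
      2 * ∫ t in (0 : ℝ)..T, (T - t) * φ t ≤
        (a + 3 / T) * ∫ t in (0 : ℝ)..T, (T - t) ^ 2 * φ t := by
  intro T hT
  have hφ_mono : MonotoneOn φ (Icc 0 T) :=
    monotoneOn_of_hasDerivWithinAt_nonneg (convex_Icc 0 T)
      (fun t ht => (hderiv t ht.1).continuousAt.continuousWithinAt)
      (fun t ht => (hderiv t (interior_subset ht).1).hasDerivWithinAt)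
      (fun t ht => hmono t (interior_subset ht).1)
  have hparts := two_mul_integral_sub_mul_le_of_deriv_le hT.le (fun t ht => hderiv t ht.1)
    (fun t ht => hle t ht.1)
  have hlower := le_integral_sub_sq_mul_of_monotoneOn hT.le hφ_mono
  have hboundary : T ^ 2 * φ 0 ≤ 3 / T * ∫ t in (0 : ℝ)..T, (T - t) ^ 2 * φ t := by
    calc T ^ 2 * φ 0 = 3 / T * (φ 0 * T ^ 3 / 3) := by field_simp
      _ ≤ _ := by gcongr
  linarith

/-- If `φ > 0` is differentiable on `[0,∞)` with `0 ≤ φ' ≤ a·φ` for some `a > 0`, then for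
every `T > 0`: `2·∫₀ᵀ (T - t)·φ(t) dt ≤ (a + 3/T)·∫₀ᵀ (T - t)²·φ(t) dt`. -/
theorem stmt_5 (a : ℝ) (ha : 0 < a) (φ φ' : ℝ → ℝ)
    (hderiv : ∀ t : ℝ, 0 ≤ t → HasDerivAt φ (φ' t) t)
    (hpos : ∀ t : ℝ, 0 ≤ t → 0 < φ t)
    (hmono : ∀ t : ℝ, 0 ≤ t → 0 ≤ φ' t)
    (hle : ∀ t : ℝ, 0 ≤ t → φ' t ≤ a * φ t) :
    ∀ T : ℝ, 0 < T →
      2 * ∫ t in (0 : ℝ)..T, (T - t) * φ t ≤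
        (a + 3 / T) * ∫ t in (0 : ℝ)..T, (T - t) ^ 2 * φ t :=
  stmt_5_general a φ φ' hderiv hmono hle
end

section
/- Let b ≥ 0, T > 0, and let F : [0,T] → ℝ be differentiable with F(0) > 0, F(0) ≥ (2b)³, and F'(t) ≥ (3/2)·F(t)^{4/3} − b·F(t) for all t ∈ [0,T] (well-defined since F remains positive). Then F(t) ≥ F(0) for all t ∈ [0,T] and T < 3·F(0)^{−1/3}. -/
/-- Riccati-type comparison lemma: if `F(0) > 0`, `F(0) ≥ (2b)³`, and
`F' ≥ (3/2)·F^{4/3} - b·F` on `[0,T]`, then `F ≥ F(0)` on `[0,T]` and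
`T < 3·F(0)^{-1/3}`. -/
theorem stmt_6 (b T : ℝ) (hb : 0 ≤ b) (hT : 0 < T) (F F' : ℝ → ℝ)
    (hderiv : ∀ t ∈ Set.Icc (0 : ℝ) T, HasDerivAt F (F' t) t)
    (hF0 : 0 < F 0) (hF0b : (2 * b) ^ 3 ≤ F 0)
    (hgrow : ∀ t ∈ Set.Icc (0 : ℝ) T,
      (3 / 2) * F t ^ ((4 : ℝ) / 3) - b * F t ≤ F' t) :
    (∀ t ∈ Set.Icc (0 : ℝ) T, F 0 ≤ F t) ∧ T < 3 * F 0 ^ (-(1 : ℝ) / 3) := by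
  -- Key pointwise estimate: if F t ≥ F 0 then F' t ≥ F t ^ (4/3).
  have key : ∀ t ∈ Set.Icc (0:ℝ) T, F 0 ≤ F t → F t ^ ((4:ℝ)/3) ≤ F' t := by
    intro t ht hFt0
    have hFt : 0 < F t := lt_of_lt_of_le hF0 hFt0
    have h2b : 2 * b ≤ F t ^ ((1:ℝ)/3) := by
      have h1 : (2*b)^3 ≤ F t := le_trans hF0b hFt0
      have h2 : ((2*b)^3 : ℝ) ^ ((1:ℝ)/3) ≤ F t ^ ((1:ℝ)/3) :=
        Real.rpow_le_rpow (by positivity) h1 (by norm_num)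
      calc 2*b = ((2*b)^3 : ℝ) ^ ((1:ℝ)/3) := by
            rw [← Real.rpow_natCast (2*b) 3, ← Real.rpow_mul (by positivity)]
            norm_num
        _ ≤ _ := h2
    have heq : F t ^ ((4:ℝ)/3) = F t * F t ^ ((1:ℝ)/3) := by
      rw [show (4:ℝ)/3 = 1 + 1/3 by norm_num, Real.rpow_add hFt, Real.rpow_one]
    have hg := hgrow t ht
    rw [heq] at hg ⊢
    nlinarith [mul_le_mul_of_nonneg_left h2b hFt.le]
  have part1 : ∀ t ∈ Set.Icc (0:ℝ) T, F 0 ≤ F t := by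
    set S : Set ℝ := {t | t ∈ Set.Icc (0:ℝ) T ∧ ∀ s ∈ Set.Icc (0:ℝ) t, F 0 ≤ F s} with hSdef
    have h0S : (0:ℝ) ∈ S := by
      refine ⟨⟨le_refl 0, hT.le⟩, fun s hs => ?_⟩
      have : s = 0 := le_antisymm hs.2 hs.1
      simp [this]
    have hbdd : BddAbove S := ⟨T, fun x hx => hx.1.2⟩
    set c := sSup S with hc
    have hc0 : 0 ≤ c := le_csSup hbdd h0S
    have hcT : c ≤ T := csSup_le ⟨0, h0S⟩ (fun x hx => hx.1.2)
    have hcIcc : c ∈ Set.Icc (0:ℝ) T := ⟨hc0, hcT⟩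
    have hcS : ∀ s ∈ Set.Icc (0:ℝ) c, F 0 ≤ F s := by
      intro s hs
      rcases lt_or_eq_of_le hs.2 with h | h
      · obtain ⟨t, htS, hst⟩ := exists_lt_of_lt_csSup ⟨0, h0S⟩ h
        exact htS.2 s ⟨hs.1, hst.le⟩
      · rw [h]
        rcases eq_or_lt_of_le hc0 with h0 | h0
        · rw [← h0]
        · have hcont : ContinuousAt F c := (hderiv c hcIcc).continuousAt
          have htend : Filter.Tendsto F (nhdsWithin c (Set.Iio c)) (nhds (F c)) :=
            hcont.continuousWithinAt.tendsto
          refine ge_of_tendsto htend ?_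
          filter_upwards [Ioo_mem_nhdsLT_of_mem (Set.mem_Ioc.mpr ⟨h0, le_refl c⟩)] with x hx
          obtain ⟨t, htS, hxt⟩ := exists_lt_of_lt_csSup ⟨0, h0S⟩ hx.2
          exact htS.2 x ⟨hx.1.le, hxt.le⟩
    rcases eq_or_lt_of_le hcT with hEq | hlt
    · intro t ht
      exact hcS t (by rw [hEq]; exact ht)
    · exfalso
      have hFc : F 0 ≤ F c := hcS c ⟨hc0, le_refl c⟩
      have hFcpos : 0 < F c := lt_of_lt_of_le hF0 hFc
      have hder := hderiv c hcIcc
      have hFpc : 0 < F' c := lt_of_lt_of_le (Real.rpow_pos_of_pos hFcpos _) (key c hcIcc hFc)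
      have hslope : Filter.Tendsto (slope F c) (nhdsWithin c {c}ᶜ) (nhds (F' c)) :=
        hasDerivAt_iff_tendsto_slope.mp hder
      have hev : ∀ᶠ y in nhdsWithin c (Set.Ioi c), 0 < slope F c y :=
        (hslope.mono_left (nhdsWithin_mono c (fun y hy => ne_of_gt hy))).eventually
          (eventually_gt_nhds hFpc)
      obtain ⟨u, hu, hIoo⟩ := mem_nhdsGT_iff_exists_Ioo_subset.mp hev
      have hcu : c < u := hu
      set t := min ((c + u)/2) T with htdef
      have hct : c < t := lt_min (by linarith) hlt
      have htT : t ≤ T := min_le_right _ _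
      have htS : t ∈ S := by
        refine ⟨⟨le_trans hc0 hct.le, htT⟩, fun s hs => ?_⟩
        rcases le_or_gt s c with h | h
        · exact hcS s ⟨hs.1, h⟩
        · have hsu : s ∈ Set.Ioo c u := by
            refine ⟨h, ?_⟩
            have h2 : t ≤ (c+u)/2 := min_le_left _ _
            have := hs.2
            linarith
          have hsl : 0 < slope F c s := hIoo hsu
          rw [slope_def_field] at hsl
          have h1 : 0 < s - c := sub_pos.mpr h
          have h2 : 0 < (F s - F c) / (s - c) * (s - c) := mul_pos hsl h1
          rw [div_mul_cancel₀ _ h1.ne'] at h2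
          linarith
      have := le_csSup hbdd htS
      linarith
  refine ⟨part1, ?_⟩
  set p : ℝ := -(1:ℝ)/3 with hp
  set H : ℝ → ℝ := fun t => F t ^ p + t/3 with hH
  have hFpos : ∀ t ∈ Set.Icc (0:ℝ) T, 0 < F t := fun t ht => lt_of_lt_of_le hF0 (part1 t ht)
  have hHd : ∀ t ∈ Set.Icc (0:ℝ) T,
      HasDerivAt H (F' t * p * F t ^ (p - 1) + 1/3) t := by
    intro t ht
    exact ((hderiv t ht).rpow_const (Or.inl (hFpos t ht).ne')).add
      ((hasDerivAt_id t).div_const 3)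
  have hHder : ∀ t ∈ Set.Icc (0:ℝ) T, F' t * p * F t ^ (p - 1) + 1/3 ≤ 0 := by
    intro t ht
    have hFt := hFpos t ht
    have hkey := key t ht (part1 t ht)
    have hneg : (0:ℝ) < F t ^ (-(4:ℝ)/3) := Real.rpow_pos_of_pos hFt _
    have hmul : F t ^ ((4:ℝ)/3) * F t ^ (-(4:ℝ)/3) = 1 := by
      rw [← Real.rpow_add hFt]; norm_num
    have hp1 : p - 1 = -(4:ℝ)/3 := by rw [hp]; norm_num
    rw [hp1, hp]
    nlinarith [mul_le_mul_of_nonneg_right hkey hneg.le]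
  have hanti : AntitoneOn H (Set.Icc 0 T) := by
    apply antitoneOn_of_deriv_nonpos (convex_Icc 0 T)
    · exact fun t ht => ((hHd t ht).continuousAt).continuousWithinAt
    · intro t ht
      rw [interior_Icc] at ht
      exact ((hHd t ⟨ht.1.le, ht.2.le⟩).differentiableAt).differentiableWithinAt
    · intro t ht
      rw [interior_Icc] at ht
      have ht' : t ∈ Set.Icc (0:ℝ) T := ⟨ht.1.le, ht.2.le⟩
      rw [(hHd t ht').deriv]
      exact hHder t ht'
  have hHT := hanti (Set.left_mem_Icc.mpr hT.le) (Set.right_mem_Icc.mpr hT.le) hT.le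
  simp only [hH] at hHT
  have hFT : 0 < F T ^ p :=
    Real.rpow_pos_of_pos (hFpos T (Set.right_mem_Icc.mpr hT.le)) _
  clear_value H
  clear_value p
  linarith
end

section
/- Let I be an interval and let ξ, η : I → ℝ be differentiable functions satisfying ξ'(t) = η(t) and η'(t) = ξ(t)·(3η(t) − ξ(t)² − 1) for all t ∈ I, and suppose θ(t) = ξ(t)² + 1 − η(t) ≠ 0 for all t ∈ I. Then the function κ(t) = (ξ(t)² + 1 − 2η(t))/θ(t)² is constant on I. -/
/-!
With `N = ξ² + 1 - 2η` and `θ = ξ² + 1 - η`, the system gives `N' = 2ξN` and `θ' = ξθ`, so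
`N` and `θ²` both solve `y' = 2ξy` and their quotient `κ` has zero derivative.
-/

theorem Convex.is_const_of_hasDerivWithinAt_zero {𝕜 G : Type*} [RCLike 𝕜] [NormedAddCommGroup G]
    [NormedSpace 𝕜 G] {f : 𝕜 → G} {s : Set 𝕜} {x y : 𝕜} (hs : Convex ℝ s)
    (hf : ∀ z ∈ s, HasDerivWithinAt f 0 s z) (hx : x ∈ s) (hy : y ∈ s) : f x = f y := by
  have h := hs.norm_image_sub_le_of_norm_hasDerivWithin_le hf (fun _ _ => norm_zero.le) hx hy
  simpa only [zero_mul, norm_le_zero_iff, sub_eq_zero, eq_comm] using h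

theorem HasDerivWithinAt.div_sq_zero_of_proportional_deriv {f g : ℝ → ℝ} {a : ℝ} {s : Set ℝ} {t : ℝ}
    (hf : HasDerivWithinAt f (2 * a * f t) s t) (hg : HasDerivWithinAt g (a * g t) s t)
    (hg0 : g t ≠ 0) : HasDerivWithinAt (fun x => f x / g x ^ 2) 0 s t := by
  have hg2 : HasDerivWithinAt (fun x => g x ^ 2) (2 * a * g t ^ 2) s t :=
    (hg.fun_pow 2).congr_deriv (by ring)
  exact (hf.fun_div hg2 (pow_ne_zero 2 hg0)).congr_deriv (by ring)

section RotatingShallowWater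

variable {ξ η : ℝ → ℝ} {s : Set ℝ} {t : ℝ}

theorem hasDerivWithinAt_sq_add_one_sub_two_mul (hξ : HasDerivWithinAt ξ (η t) s t)
    (hη : HasDerivWithinAt η (ξ t * (3 * η t - ξ t ^ 2 - 1)) s t) :
    HasDerivWithinAt (fun x => ξ x ^ 2 + 1 - 2 * η x)
      (2 * ξ t * (ξ t ^ 2 + 1 - 2 * η t)) s t :=
  (((hξ.fun_pow 2).add_const 1).sub (hη.const_mul 2)).congr_deriv (by ring)

theorem hasDerivWithinAt_sq_add_one_sub (hξ : HasDerivWithinAt ξ (η t) s t)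
    (hη : HasDerivWithinAt η (ξ t * (3 * η t - ξ t ^ 2 - 1)) s t) :
    HasDerivWithinAt (fun x => ξ x ^ 2 + 1 - η x) (ξ t * (ξ t ^ 2 + 1 - η t)) s t :=
  (((hξ.fun_pow 2).add_const 1).sub hη).congr_deriv (by ring)

theorem hasDerivWithinAt_kappa_zero (hξ : HasDerivWithinAt ξ (η t) s t)
    (hη : HasDerivWithinAt η (ξ t * (3 * η t - ξ t ^ 2 - 1)) s t)
    (hθ : ξ t ^ 2 + 1 - η t ≠ 0) :
    HasDerivWithinAt (fun x => (ξ x ^ 2 + 1 - 2 * η x) / (ξ x ^ 2 + 1 - η x) ^ 2) 0 s t :=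
  (hasDerivWithinAt_sq_add_one_sub_two_mul hξ hη).div_sq_zero_of_proportional_deriv
    (hasDerivWithinAt_sq_add_one_sub hξ hη) hθ

end RotatingShallowWater

/-- For solutions of `ξ' = η`, `η' = ξ(3η - ξ² - 1)` on an interval `I` with
`θ = ξ² + 1 - η ≠ 0` on `I`, the quantity `κ = (ξ² + 1 - 2η)/θ²` is constant on `I`. -/
theorem stmt_10 (I : Set ℝ) (hI : I.OrdConnected) (ξ η : ℝ → ℝ)
    (hξ : ∀ t ∈ I, HasDerivWithinAt ξ (η t) I t)
    (hη : ∀ t ∈ I, HasDerivWithinAt η (ξ t * (3 * η t - (ξ t) ^ 2 - 1)) I t)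
    (hθ : ∀ t ∈ I, (ξ t) ^ 2 + 1 - η t ≠ 0) :
    ∀ s ∈ I, ∀ t ∈ I,
      ((ξ s) ^ 2 + 1 - 2 * η s) / ((ξ s) ^ 2 + 1 - η s) ^ 2 =
        ((ξ t) ^ 2 + 1 - 2 * η t) / ((ξ t) ^ 2 + 1 - η t) ^ 2 := by
  intro s hs t ht
  exact hI.convex.is_const_of_hasDerivWithinAt_zero
    (fun u hu => hasDerivWithinAt_kappa_zero (hξ u hu) (hη u hu) (hθ u hu)) hs ht
end

section
/- Let I be an interval containing 0 and let ξ, η : I → ℝ be differentiable functions satisfying ξ'(t) = η(t) and η'(t) = ξ(t)·(3η(t) − ξ(t)² − 1) for all t ∈ I, with θ(t) = ξ(t)² + 1 − η(t) ≠ 0 on I. Set κ₀ = (ξ(0)² + 1 − 2η(0))/θ(0)². Then for all t ∈ I: ξ(t)² + 1 = 2θ(t) − κ₀·θ(t)², η(t) = θ(t) − κ₀·θ(t)², and (θ'(t))² = θ(t)²·(2θ(t) − κ₀·θ(t)² − 1). -/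
/-- For solutions of `ξ' = η`, `η' = ξ(3η - ξ² - 1)` on an interval `I` containing `0`,
with `θ = ξ² + 1 - η ≠ 0` on `I` and `κ₀ = (ξ(0)² + 1 - 2η(0))/θ(0)²`, one has
`ξ² + 1 = 2θ - κ₀θ²`, `η = θ - κ₀θ²`, and `(θ')² = θ²(2θ - κ₀θ² - 1)` on `I`. -/
theorem stmt_11 (I : Set ℝ) (hI : I.OrdConnected) (h0 : (0 : ℝ) ∈ I) (ξ η : ℝ → ℝ)
    (hξ : ∀ t ∈ I, HasDerivWithinAt ξ (η t) I t)
    (hη : ∀ t ∈ I, HasDerivWithinAt η (ξ t * (3 * η t - (ξ t) ^ 2 - 1)) I t)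
    (hθ : ∀ t ∈ I, (ξ t) ^ 2 + 1 - η t ≠ 0)
    (κ₀ : ℝ)
    (hκ₀ : κ₀ = ((ξ 0) ^ 2 + 1 - 2 * η 0) / ((ξ 0) ^ 2 + 1 - η 0) ^ 2) :
    ∀ t ∈ I,
      (ξ t) ^ 2 + 1 =
          2 * ((ξ t) ^ 2 + 1 - η t) - κ₀ * ((ξ t) ^ 2 + 1 - η t) ^ 2 ∧
      η t = ((ξ t) ^ 2 + 1 - η t) - κ₀ * ((ξ t) ^ 2 + 1 - η t) ^ 2 ∧
      ∃ d : ℝ,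
        HasDerivWithinAt (fun s => (ξ s) ^ 2 + 1 - η s) d I t ∧
        d ^ 2 = ((ξ t) ^ 2 + 1 - η t) ^ 2 *
          (2 * ((ξ t) ^ 2 + 1 - η t) - κ₀ * ((ξ t) ^ 2 + 1 - η t) ^ 2 - 1) := by
  set θ : ℝ → ℝ := fun s => (ξ s) ^ 2 + 1 - η s with hθdef
  -- derivative of θ
  have hθ' : ∀ t ∈ I, HasDerivWithinAt θ (ξ t * θ t) I t := by
    intro t ht
    have h1 : HasDerivWithinAt (fun s => (ξ s) ^ 2 + 1 - η s)
        (2 * ξ t * η t + 0 - ξ t * (3 * η t - (ξ t) ^ 2 - 1)) I t := by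
      exact (((hξ t ht).pow 2).congr_deriv (by ring)).add_const 1 |>.sub (hη t ht)
    convert h1 using 1
    simp only [hθdef]; ring
  -- derivative of A = ξ² + 1 - 2η
  have hA' : ∀ t ∈ I, HasDerivWithinAt (fun s => (ξ s) ^ 2 + 1 - 2 * η s)
      (2 * ξ t * ((ξ t) ^ 2 + 1 - 2 * η t)) I t := by
    intro t ht
    have h1 : HasDerivWithinAt (fun s => (ξ s) ^ 2 + 1 - 2 * η s)
        (2 * ξ t * η t + 0 - 2 * (ξ t * (3 * η t - (ξ t) ^ 2 - 1))) I t := by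
      exact (((hξ t ht).pow 2).congr_deriv (by ring)).add_const 1 |>.sub
        ((hη t ht).const_mul 2)
    convert h1 using 1; ring
  -- κ = A / θ² has zero derivative on I
  have hκ' : ∀ t ∈ I, HasDerivWithinAt
      (fun s => ((ξ s) ^ 2 + 1 - 2 * η s) / (θ s) ^ 2) 0 I t := by
    intro t ht
    have hne : (θ t) ^ 2 ≠ 0 := pow_ne_zero 2 (hθ t ht)
    have h1 : HasDerivWithinAt (fun s => ((ξ s) ^ 2 + 1 - 2 * η s) / (θ s) ^ 2)
        ((2 * ξ t * ((ξ t) ^ 2 + 1 - 2 * η t) * (θ t) ^ 2 -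
          ((ξ t) ^ 2 + 1 - 2 * η t) * (2 * θ t ^ 1 * (ξ t * θ t))) / ((θ t) ^ 2) ^ 2)
        I t := (hA' t ht).div ((hθ' t ht).pow 2) hne
    convert h1 using 1
    field_simp
    ring
  -- κ is constant on I
  have hconst : ∀ t ∈ I, ((ξ t) ^ 2 + 1 - 2 * η t) / (θ t) ^ 2 = κ₀ := by
    intro t ht
    have hconv : Convex ℝ I := hI.convex
    have := hconv.norm_image_sub_le_of_norm_hasDerivWithin_le
      (C := 0) (f' := fun _ => (0 : ℝ)) (fun x hx => hκ' x hx)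
      (fun x _ => by simp) h0 ht
    have heq : ((ξ t) ^ 2 + 1 - 2 * η t) / (θ t) ^ 2
        = ((ξ 0) ^ 2 + 1 - 2 * η 0) / (θ 0) ^ 2 := by
      have := this
      simp at this
      linarith [abs_nonneg (((ξ t) ^ 2 + 1 - 2 * η t) / (θ t) ^ 2 -
        ((ξ 0) ^ 2 + 1 - 2 * η 0) / (θ 0) ^ 2), this,
        abs_sub_abs_le_abs_sub (((ξ t) ^ 2 + 1 - 2 * η t) / (θ t) ^ 2)
          (((ξ 0) ^ 2 + 1 - 2 * η 0) / (θ 0) ^ 2)]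
    rw [heq, hκ₀]
  intro t ht
  have hne : (θ t) ≠ 0 := hθ t ht
  have hkey : (ξ t) ^ 2 + 1 - 2 * η t = κ₀ * (θ t) ^ 2 := by
    have := hconst t ht
    field_simp at this
    linarith
  refine ⟨by simp only [hθdef] at hkey ⊢; nlinarith, by simp only [hθdef] at hkey ⊢; nlinarith,
    ξ t * θ t, hθ' t ht, ?_⟩
  simp only [hθdef] at hkey ⊢
  have e : 2 * ((ξ t) ^ 2 + 1 - η t) - κ₀ * ((ξ t) ^ 2 + 1 - η t) ^ 2 - 1 = (ξ t) ^ 2 := by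
    linarith
  rw [e]; ring
end

section
/- Let I be an interval containing 0 and let ξ, η : I → ℝ be differentiable functions satisfying ξ'(t) = η(t) and η'(t) = ξ(t)·(3η(t) − ξ(t)² − 1) for all t ∈ I, and suppose η(0) = ξ(0)² + 1. Then for every t ∈ I one has t + arctan(ξ(0)) ∈ (−π/2, π/2), ξ(t) = tan(t + arctan(ξ(0))), and η(t) = ξ(t)² + 1 = 1/cos²(t + arctan(ξ(0))). -/
/-!
The quantity `θ = ξ² + 1 - η` satisfies the linear equation `θ' = ξ θ`, so by Grönwall's
uniqueness it vanishes on `I` once `θ(0) = 0`. Then `ξ' = ξ² + 1`, i.e. `(arctan ξ)' = 1`,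
so `arctan ξ(t) = t + arctan ξ(0)`; since `arctan` takes values in `(-π/2, π/2)`, this
confines `t + arctan ξ(0)` to that interval and gives `ξ(t) = tan(t + arctan ξ(0))`.
-/

open Set Real

section Gronwall

variable {E : Type*} [NormedAddCommGroup E] [NormedSpace ℝ E]
  {I : Set ℝ} {f f' : ℝ → E} {K : ℝ → ℝ} {a : ℝ}

theorem Set.OrdConnected.eq_zero_of_norm_deriv_le_mul_of_le (hI : I.OrdConnected) (ha : a ∈ I)
    (hK : ContinuousOn K I) (hf : ∀ t ∈ I, HasDerivWithinAt f (f' t) I t)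
    (bound : ∀ t ∈ I, ‖f' t‖ ≤ K t * ‖f t‖) (hfa : f a = 0) :
    ∀ t ∈ I, a ≤ t → f t = 0 := by
  intro t ht hat
  have hsub : Icc a t ⊆ I := hI.out ha ht
  obtain ⟨C, hC⟩ := isCompact_Icc.exists_bound_of_continuousOn (hK.mono hsub)
  refine eq_zero_of_abs_deriv_le_mul_abs_self_of_eq_zero_right (K := C)
    (fun x hx => (hf x (hsub hx)).continuousWithinAt.mono hsub)
    (fun x hx => ((hf x (hsub (Ico_subset_Icc_self hx))).mono hsub).mono_of_mem_nhdsWithin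
      (Icc_mem_nhdsGE_of_mem hx)) hfa (fun x hx => ?_) t ⟨hat, le_rfl⟩
  have hx : x ∈ Icc a t := Ico_subset_Icc_self hx
  calc ‖f' x‖ ≤ K x * ‖f x‖ := bound x (hsub hx)
    _ ≤ C * ‖f x‖ := by
      gcongr
      exact (le_abs_self _).trans (hC x hx)

theorem Set.OrdConnected.eq_zero_of_norm_deriv_le_mul (hI : I.OrdConnected) (ha : a ∈ I)
    (hK : ContinuousOn K I) (hf : ∀ t ∈ I, HasDerivWithinAt f (f' t) I t)
    (bound : ∀ t ∈ I, ‖f' t‖ ≤ K t * ‖f t‖) (hfa : f a = 0) :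
    ∀ t ∈ I, f t = 0 := by
  intro t ht
  rcases le_total a t with hat | hta
  · exact hI.eq_zero_of_norm_deriv_le_mul_of_le ha hK hf bound hfa t ht hat
  -- For `t ≤ a`, run the forward argument for `s ↦ f (-s)` on `-I`.
  have hmaps : MapsTo Neg.neg (-I) I := fun x hx => hx
  have hI' : (-I).OrdConnected :=
    convex_iff_ordConnected.mp (convex_iff_ordConnected.mpr hI).neg
  have hf' : ∀ s ∈ -I, HasDerivWithinAt (f ∘ Neg.neg) ((-1 : ℝ) • f' (-s)) (-I) s :=
    fun s hs => (hf (-s) hs).scomp s (hasDerivWithinAt_neg s (-I)) hmaps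
  have := hI'.eq_zero_of_norm_deriv_le_mul_of_le (K := K ∘ Neg.neg) (by simpa using ha)
    (hK.comp continuousOn_neg hmaps) hf' (fun s hs => by simpa using bound (-s) hs)
    (by simpa using hfa) (-t) (by simpa using ht) (neg_le_neg hta)
  simpa using this

end Gronwall

theorem Set.OrdConnected.arctan_eq_of_hasDerivWithinAt_sq_add_one {I : Set ℝ}
    (hI : I.OrdConnected) {a : ℝ} (ha : a ∈ I) {ξ : ℝ → ℝ}
    (hξ : ∀ t ∈ I, HasDerivWithinAt ξ (ξ t ^ 2 + 1) I t) :
    ∀ t ∈ I, arctan (ξ t) = t - a + arctan (ξ a) := by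
  have hderiv : ∀ t ∈ I, HasDerivWithinAt (fun t => arctan (ξ t) - (t - a + arctan (ξ a)))
      0 I t := by
    intro t ht
    have h := ((hasDerivAt_arctan (ξ t)).comp_hasDerivWithinAt t (hξ t ht)).sub
      (((hasDerivWithinAt_id t I).sub_const a).add_const (arctan (ξ a)))
    refine h.congr_deriv ?_
    field_simp
    ring
  intro t ht
  have := hI.eq_zero_of_norm_deriv_le_mul ha (K := 0) continuousOn_const hderiv
    (fun _ _ => by simp) (by simp) t ht
  linarith

/-- For solutions of `ξ' = η`, `η' = ξ(3η - ξ² - 1)` on an interval `I` containing `0`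
with `η(0) = ξ(0)² + 1`, the solution is explicit: for all `t ∈ I`,
`t + arctan(ξ(0)) ∈ (-π/2, π/2)`, `ξ(t) = tan(t + arctan(ξ(0)))`, and
`η(t) = ξ(t)² + 1 = 1/cos²(t + arctan(ξ(0)))`. -/
theorem stmt_12 (I : Set ℝ) (hI : I.OrdConnected) (h0 : (0 : ℝ) ∈ I) (ξ η : ℝ → ℝ)
    (hξ : ∀ t ∈ I, HasDerivWithinAt ξ (η t) I t)
    (hη : ∀ t ∈ I, HasDerivWithinAt η (ξ t * (3 * η t - (ξ t) ^ 2 - 1)) I t)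
    (hinit : η 0 = (ξ 0) ^ 2 + 1) :
    ∀ t ∈ I,
      t + Real.arctan (ξ 0) ∈ Set.Ioo (-(Real.pi / 2)) (Real.pi / 2) ∧
      ξ t = Real.tan (t + Real.arctan (ξ 0)) ∧
      η t = (ξ t) ^ 2 + 1 ∧
      η t = 1 / Real.cos (t + Real.arctan (ξ 0)) ^ 2 := by
  have hθ : ∀ t ∈ I, HasDerivWithinAt (fun t => ξ t ^ 2 + 1 - η t)
      (ξ t * (ξ t ^ 2 + 1 - η t)) I t := fun t ht =>
    ((((hξ t ht).pow 2).add_const 1).sub (hη t ht)).congr_deriv (by ring)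
  have hη_eq : ∀ t ∈ I, η t = ξ t ^ 2 + 1 := fun t ht => by
    have := hI.eq_zero_of_norm_deriv_le_mul h0 (K := fun t => ‖ξ t‖)
      (fun t ht => (hξ t ht).continuousWithinAt.norm) hθ (fun t _ => (norm_mul _ _).le)
      (by simp [hinit]) t ht
    linarith
  have harctan := hI.arctan_eq_of_hasDerivWithinAt_sq_add_one h0
    fun t ht => hη_eq t ht ▸ hξ t ht
  intro t ht
  have hs : arctan (ξ t) = t + arctan (ξ 0) := by simpa using harctan t ht
  rw [← hs]
  refine ⟨⟨neg_pi_div_two_lt_arctan _, arctan_lt_pi_div_two _⟩, (tan_arctan _).symm,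
    hη_eq t ht, ?_⟩
  rw [cos_sq_arctan, hη_eq t ht]
  field_simp
  ring
end

section
/- Fix C ∈ ℝ and let I be an interval on which cos((t + C)/2) ≠ 0. Then the functions ξ(t) = tan((t + C)/2) and η(t) = 1/(2·cos²((t + C)/2)) satisfy ξ'(t) = η(t) and η'(t) = ξ(t)·(3η(t) − ξ(t)² − 1) for all t ∈ I; moreover their conserved quantity κ = (ξ² + 1 − 2η)/(ξ² + 1 − η)² vanishes identically on I. -/
/-! The identity `tan² + 1 = 1 / cos²` says `ξ² + 1 = 2η`: the curve lies on the level set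
`κ = 0`. There `3η - ξ² - 1 = η`, so the second equation reduces to `η' = ξ η`, which is the
chain rule for `1 / (2 cos² ((t + C) / 2))`, and the numerator of `κ` vanishes. -/

open Real

namespace Real

theorem tan_sq_add_one {x : ℝ} (hx : cos x ≠ 0) : tan x ^ 2 + 1 = 1 / cos x ^ 2 := by
  rw [one_div, ← inv_one_add_tan_sq hx, inv_inv, add_comm]

theorem hasDerivAt_inv_cos_sq {x : ℝ} (hx : cos x ≠ 0) :
    HasDerivAt (fun y => (cos y ^ 2)⁻¹) (2 * tan x / cos x ^ 2) x := by
  refine (((hasDerivAt_cos x).fun_pow 2).inv (pow_ne_zero 2 hx)).congr_deriv ?_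
  rw [tan_eq_sin_div_cos]
  field_simp
  ring

end Real

theorem hasDerivAt_add_const_div_two (C t : ℝ) : HasDerivAt (fun s => (s + C) / 2) (1 / 2) t := by
  simpa using ((hasDerivAt_id t).add_const C).div_const 2

theorem hasDerivAt_tan_add_const_div_two {C t : ℝ} (h : cos ((t + C) / 2) ≠ 0) :
    HasDerivAt (fun s => tan ((s + C) / 2)) (1 / (2 * cos ((t + C) / 2) ^ 2)) t := by
  refine ((hasDerivAt_tan h).comp t (hasDerivAt_add_const_div_two C t)).congr_deriv ?_
  ring

theorem hasDerivAt_inv_two_mul_cos_sq_add_const_div_two {C t : ℝ} (h : cos ((t + C) / 2) ≠ 0) :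
    HasDerivAt (fun s => 1 / (2 * cos ((s + C) / 2) ^ 2))
      (tan ((t + C) / 2) * (1 / (2 * cos ((t + C) / 2) ^ 2))) t := by
  have hη : (fun s => 1 / (2 * cos ((s + C) / 2) ^ 2)) =
      fun s => 1 / 2 * (cos ((s + C) / 2) ^ 2)⁻¹ := by
    ext s; ring
  rw [hη]
  refine (((hasDerivAt_inv_cos_sq h).comp t (hasDerivAt_add_const_div_two C t)).const_mul
    (1 / 2)).congr_deriv ?_
  ring

/-- On any interval where `cos((t + C)/2) ≠ 0`, the functions `ξ(t) = tan((t + C)/2)` and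
`η(t) = 1/(2 cos²((t + C)/2))` solve `ξ' = η`, `η' = ξ(3η - ξ² - 1)`, and the conserved
quantity `κ = (ξ² + 1 - 2η)/(ξ² + 1 - η)²` vanishes identically. -/
theorem stmt_13 (C : ℝ) (I : Set ℝ)
    (hI : ∀ t ∈ I, Real.cos ((t + C) / 2) ≠ 0) :
    ∀ t ∈ I,
      HasDerivAt (fun s => Real.tan ((s + C) / 2))
        (1 / (2 * Real.cos ((t + C) / 2) ^ 2)) t ∧
      HasDerivAt (fun s => 1 / (2 * Real.cos ((s + C) / 2) ^ 2))
        (Real.tan ((t + C) / 2) *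
          (3 * (1 / (2 * Real.cos ((t + C) / 2) ^ 2)) -
            Real.tan ((t + C) / 2) ^ 2 - 1)) t ∧
      (Real.tan ((t + C) / 2) ^ 2 + 1 - 2 * (1 / (2 * Real.cos ((t + C) / 2) ^ 2))) /
          (Real.tan ((t + C) / 2) ^ 2 + 1 - 1 / (2 * Real.cos ((t + C) / 2) ^ 2)) ^ 2
        = 0 := by
  intro t ht
  have hcos := hI t ht
  have hξη : tan ((t + C) / 2) ^ 2 + 1 = 2 * (1 / (2 * cos ((t + C) / 2) ^ 2)) := by
    rw [tan_sq_add_one hcos]; ring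
  refine ⟨hasDerivAt_tan_add_const_div_two hcos, ?_, ?_⟩
  · convert hasDerivAt_inv_two_mul_cos_sq_add_const_div_two hcos using 2
    linear_combination -hξη
  · rw [hξη, sub_self, zero_div]
end

section
/- Let κ₀ ∈ (0,1) and set θ̄ = (1 − √(1 − κ₀))/κ₀ and θ̂ = (1 + √(1 − κ₀))/κ₀. Then 0 < θ̄ < θ̂, the quantity 2s − κ₀s² − 1 is positive for s ∈ (θ̄, θ̂) and vanishes at s = θ̄ and s = θ̂, and the improper integral ∫_{θ̄}^{θ̂} ds/(s·√(2s − κ₀s² − 1)) converges and equals π. -/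
open MeasureTheory Real Set

/-!
Factor `2s - κ₀s² - 1 = κ₀ (s - θ̄)(θ̂ - s)`. For `0 < a < b` the function
`arcsin (((a + b) s - 2ab) / ((b - a) s)) / √(ab)` is a primitive of `1 / (s √((s - a)(b - s)))`
on `(a, b)`, continuous on `[a, b]`, and runs from `-π/(2√(ab))` to `π/(2√(ab))`. The integrand
is positive, so it is integrable and `∫_a^b = π/√(ab)`. With `θ̄ θ̂ = 1/κ₀` this gives `π`.
-/

/-- The Möbius map sending `a ↦ -1`, `b ↦ 1` (and `0 ↦ ∞`). -/
noncomputable def arcsinArg (a b s : ℝ) : ℝ := ((a + b) * s - 2 * a * b) / ((b - a) * s)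

section Integral

variable {a b : ℝ}

lemma arcsinArg_left (ha : a ≠ 0) (hab : a ≠ b) : arcsinArg a b a = -1 := by
  have : b - a ≠ 0 := sub_ne_zero.mpr hab.symm
  unfold arcsinArg
  field_simp
  ring

lemma arcsinArg_right (hb : b ≠ 0) (hab : a ≠ b) : arcsinArg a b b = 1 := by
  have : b - a ≠ 0 := sub_ne_zero.mpr hab.symm
  unfold arcsinArg
  field_simp
  ring

lemma one_sub_arcsinArg_sq (hab : a ≠ b) {s : ℝ} (hs : s ≠ 0) :
    1 - arcsinArg a b s ^ 2 = 4 * (a * b) * ((s - a) * (b - s)) / ((b - a) * s) ^ 2 := by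
  have : b - a ≠ 0 := sub_ne_zero.mpr hab.symm
  unfold arcsinArg
  field_simp
  ring

lemma hasDerivAt_arcsinArg (hab : a ≠ b) {s : ℝ} (hs : s ≠ 0) :
    HasDerivAt (arcsinArg a b) (2 * a * b / ((b - a) * s ^ 2)) s := by
  have : b - a ≠ 0 := sub_ne_zero.mpr hab.symm
  have h := (((hasDerivAt_id' s).const_mul (a + b)).sub_const (2 * a * b)).div
    ((hasDerivAt_id' s).const_mul (b - a)) (mul_ne_zero this hs)
  refine h.congr_deriv ?_
  field_simp
  ring

lemma continuousAt_arcsin_arcsinArg (hab : a ≠ b) {s : ℝ} (hs : s ≠ 0) :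
    ContinuousAt (fun s => arcsin (arcsinArg a b s) / √(a * b)) s :=
  (continuous_arcsin.continuousAt.comp (hasDerivAt_arcsinArg hab hs).continuousAt).div_const _

lemma hasDerivAt_arcsin_arcsinArg (ha : 0 < a) {s : ℝ} (hs : s ∈ Ioo a b) :
    HasDerivAt (fun s => arcsin (arcsinArg a b s) / √(a * b))
      (1 / (s * √((s - a) * (b - s)))) s := by
  obtain ⟨has, hsb⟩ := hs
  have hs0 : 0 < s := ha.trans has
  have hab : a < b := has.trans hsb
  have hb : 0 < b := ha.trans hab
  have hgap : 0 < (s - a) * (b - s) := mul_pos (by linarith) (by linarith)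
  have hden : 0 < (b - a) * s := mul_pos (by linarith) hs0
  have hsq : 0 < 1 - arcsinArg a b s ^ 2 := by
    rw [one_sub_arcsinArg_sq hab.ne hs0.ne']
    positivity
  have hlt : |arcsinArg a b s| < 1 := by
    rw [← sq_lt_one_iff_abs_lt_one]
    linarith
  have h := ((hasDerivAt_arcsin (abs_lt.mp hlt).1.ne' (abs_lt.mp hlt).2.ne).comp s
    (hasDerivAt_arcsinArg hab.ne hs0.ne')).div_const √(a * b)
  refine h.congr_deriv ?_
  rw [one_sub_arcsinArg_sq hab.ne hs0.ne', sqrt_div' _ (sq_nonneg _), sqrt_sq hden.le,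
    sqrt_mul' _ hgap.le, sqrt_mul' _ (by positivity : (0 : ℝ) ≤ a * b),
    show √4 = 2 by rw [show (4 : ℝ) = 2 ^ 2 by norm_num, sqrt_sq zero_le_two]]
  have : 0 < √(a * b) := sqrt_pos.mpr (by positivity)
  have : 0 < √((s - a) * (b - s)) := sqrt_pos.mpr hgap
  have : b - a ≠ 0 := by linarith
  field_simp
  rw [sq_sqrt (by positivity)]

theorem integral_one_div_mul_sqrt_sub_mul_sub (ha : 0 < a) (hab : a < b) :
    IntervalIntegrable (fun s => 1 / (s * √((s - a) * (b - s)))) volume a b ∧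
      ∫ s in a..b, 1 / (s * √((s - a) * (b - s))) = π / √(a * b) := by
  have hb : 0 < b := ha.trans hab
  have hderiv : ∀ s ∈ Ioo a b, HasDerivAt (fun s => arcsin (arcsinArg a b s) / √(a * b))
      (1 / (s * √((s - a) * (b - s)))) s := fun s hs => hasDerivAt_arcsin_arcsinArg ha hs
  have hnonneg : ∀ s ∈ Ioo a b, 0 ≤ 1 / (s * √((s - a) * (b - s))) := fun s hs => by
    have := ha.trans hs.1
    positivity
  have hcont : ContinuousOn (fun s => arcsin (arcsinArg a b s) / √(a * b)) (Icc a b) :=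
    fun s hs => (continuousAt_arcsin_arcsinArg hab.ne (ha.trans_le hs.1).ne').continuousWithinAt
  have hint : IntervalIntegrable (fun s => 1 / (s * √((s - a) * (b - s)))) volume a b :=
    (intervalIntegrable_iff_integrableOn_Ioc_of_le hab.le).mpr
      (intervalIntegral.integrableOn_deriv_of_nonneg hcont hderiv hnonneg)
  refine ⟨hint, ?_⟩
  rw [intervalIntegral.integral_eq_sub_of_hasDerivAt_of_le hab.le hcont hderiv hint,
    arcsinArg_left ha.ne' hab.ne, arcsinArg_right hb.ne' hab.ne, arcsin_one, arcsin_neg_one]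
  ring

end Integral

lemma two_mul_sub_mul_sq_sub_one_eq_mul {κ : ℝ} (hκ : 0 < κ) (hκ1 : κ ≤ 1) (s : ℝ) :
    2 * s - κ * s ^ 2 - 1
      = κ * ((s - (1 - √(1 - κ)) / κ) * ((1 + √(1 - κ)) / κ - s)) := by
  have hr := sq_sqrt (sub_nonneg.mpr hκ1)
  field_simp
  linear_combination -hr

lemma one_sub_sqrt_div_mul_one_add_sqrt_div {κ : ℝ} (hκ : 0 < κ) (hκ1 : κ ≤ 1) :
    (1 - √(1 - κ)) / κ * ((1 + √(1 - κ)) / κ) = 1 / κ := by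
  have hr := sq_sqrt (sub_nonneg.mpr hκ1)
  field_simp
  linear_combination -hr

/-- For `κ₀ ∈ (0,1)` and the roots `θ̄ = (1 - √(1 - κ₀))/κ₀`, `θ̂ = (1 + √(1 - κ₀))/κ₀`
of `2s - κ₀s² - 1`: one has `0 < θ̄ < θ̂`, the quantity `2s - κ₀s² - 1` is positive on
`(θ̄, θ̂)` and vanishes at the endpoints, and the improper integral
`∫_{θ̄}^{θ̂} ds/(s √(2s - κ₀s² - 1))` converges and equals `π`. -/
theorem stmt_16 (κ₀ : ℝ) (hκ : κ₀ ∈ Set.Ioo (0 : ℝ) 1) :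
    0 < (1 - Real.sqrt (1 - κ₀)) / κ₀ ∧
    (1 - Real.sqrt (1 - κ₀)) / κ₀ < (1 + Real.sqrt (1 - κ₀)) / κ₀ ∧
    (∀ s ∈ Set.Ioo ((1 - Real.sqrt (1 - κ₀)) / κ₀) ((1 + Real.sqrt (1 - κ₀)) / κ₀),
      0 < 2 * s - κ₀ * s ^ 2 - 1) ∧
    2 * ((1 - Real.sqrt (1 - κ₀)) / κ₀) - κ₀ * ((1 - Real.sqrt (1 - κ₀)) / κ₀) ^ 2 - 1 = 0 ∧
    2 * ((1 + Real.sqrt (1 - κ₀)) / κ₀) - κ₀ * ((1 + Real.sqrt (1 - κ₀)) / κ₀) ^ 2 - 1 = 0 ∧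
    IntervalIntegrable (fun s => 1 / (s * Real.sqrt (2 * s - κ₀ * s ^ 2 - 1)))
      volume ((1 - Real.sqrt (1 - κ₀)) / κ₀) ((1 + Real.sqrt (1 - κ₀)) / κ₀) ∧
    ∫ s in ((1 - Real.sqrt (1 - κ₀)) / κ₀)..((1 + Real.sqrt (1 - κ₀)) / κ₀),
        1 / (s * Real.sqrt (2 * s - κ₀ * s ^ 2 - 1)) = Real.pi := by
  obtain ⟨hκ0, hκ1⟩ := hκ
  have hq := two_mul_sub_mul_sq_sub_one_eq_mul hκ0 hκ1.le
  have hprod := one_sub_sqrt_div_mul_one_add_sqrt_div hκ0 hκ1.le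
  have hr1 : √(1 - κ₀) < 1 := (sqrt_lt' one_pos).2 (by linarith)
  set A := (1 - √(1 - κ₀)) / κ₀
  set B := (1 + √(1 - κ₀)) / κ₀
  have hA : 0 < A := div_pos (by linarith) hκ0
  have hAB : A < B := div_lt_div_of_pos_right (by linarith [sqrt_pos.mpr (sub_pos.mpr hκ1)]) hκ0
  have hf : (fun s => 1 / (s * √(2 * s - κ₀ * s ^ 2 - 1)))
      = fun s => (√κ₀)⁻¹ * (1 / (s * √((s - A) * (B - s)))) := by
    funext s
    rw [hq, sqrt_mul hκ0.le]
    ring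
  obtain ⟨hint, hval⟩ := integral_one_div_mul_sqrt_sub_mul_sub hA hAB
  refine ⟨hA, hAB, fun s hs => ?_, by rw [hq]; ring, by rw [hq]; ring, ?_, ?_⟩
  · rw [hq]
    exact mul_pos hκ0 (mul_pos (sub_pos.2 hs.1) (sub_pos.2 hs.2))
  · rw [hf]
    exact hint.const_mul _
  · rw [hf, intervalIntegral.integral_const_mul, hval, hprod, one_div, sqrt_inv]
    have : 0 < √κ₀ := sqrt_pos.mpr hκ0
    field_simp
end

section
/- Let ξ, η : [0,∞) → ℝ be differentiable functions satisfying ξ'(t) = η(t) and η'(t) = ξ(t)·(3η(t) − ξ(t)² − 1) for all t ≥ 0. Then ξ(0)² + 1 − 2η(0) > 0. -/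
/-!
The quantity `u = ξ² + 1 - 2η` satisfies the linear equation `u' = 2ξ u`, so its sign is
preserved along the solution. If `u(0) ≤ 0`, then `ξ' = η ≥ (1 + ξ²) / 2` for all `t ≥ 0`, hence
`arctan ξ` grows at least like `t / 2`; since `arctan` takes values in an interval of length `π`,
the solution cannot exist beyond `t = 2π`.
-/

open Real Set

theorem exists_hasDerivWithinAt_Ici_of_continuousOn {f : ℝ → ℝ} {t₀ : ℝ}
    (hf : ContinuousOn f (Ici t₀)) :
    ∃ F : ℝ → ℝ, ∀ t, t₀ ≤ t → HasDerivWithinAt F (f t) (Ici t₀) t := by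
  -- `f ∘ max t₀` is continuous on all of `ℝ` and agrees with `f` on `[t₀, ∞)`.
  have hg : Continuous fun s => f (max s t₀) :=
    hf.comp_continuous (continuous_id.max continuous_const) fun s => le_max_right s t₀
  refine ⟨fun t => ∫ s in t₀..t, f (max s t₀), fun t ht => ?_⟩
  have hF := (hg.integral_hasStrictDerivAt t₀ t).hasDerivAt.hasDerivWithinAt (s := Ici t₀)
  rwa [max_eq_left ht] at hF

theorem mul_exp_neg_eq_of_hasDerivWithinAt {u a G : ℝ → ℝ} {t₀ : ℝ}
    (hu : ∀ t, t₀ ≤ t → HasDerivWithinAt u (a t * u t) (Ici t₀) t)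
    (hG : ∀ t, t₀ ≤ t → HasDerivWithinAt G (a t) (Ici t₀) t) {t : ℝ} (ht : t₀ ≤ t) :
    u t * exp (-G t) = u t₀ * exp (-G t₀) := by
  have hw : ∀ s, t₀ ≤ s → HasDerivWithinAt (fun s => u s * exp (-G s)) 0 (Ici t₀) s :=
    fun s hs => ((hu s hs).mul (hG s hs).neg.exp).congr_deriv (by ring)
  have hcont : ContinuousOn (fun s => u s * exp (-G s)) (Icc t₀ t) :=
    fun s hs => (hw s hs.1).continuousWithinAt.mono Icc_subset_Ici_self
  exact constant_of_has_deriv_right_zero hcont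
    (fun s hs => (hw s hs.1).mono (Ici_subset_Ici.2 hs.1)) t (right_mem_Icc.2 ht)

theorem nonpos_of_hasDerivWithinAt_mul_self {u a : ℝ → ℝ} {t₀ : ℝ}
    (ha : ContinuousOn a (Ici t₀))
    (hu : ∀ t, t₀ ≤ t → HasDerivWithinAt u (a t * u t) (Ici t₀) t)
    (hu₀ : u t₀ ≤ 0) {t : ℝ} (ht : t₀ ≤ t) : u t ≤ 0 := by
  obtain ⟨G, hG⟩ := exists_hasDerivWithinAt_Ici_of_continuousOn ha
  have h := mul_exp_neg_eq_of_hasDerivWithinAt hu hG ht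
  have h₀ : u t₀ * exp (-G t₀) ≤ 0 := mul_nonpos_of_nonpos_of_nonneg hu₀ (exp_pos _).le
  exact nonpos_of_mul_nonpos_left (h ▸ h₀) (exp_pos _)

theorem mul_sub_le_arctan_sub_arctan {ξ ξ' : ℝ → ℝ} {t₀ c : ℝ}
    (hξ : ∀ t, t₀ ≤ t → HasDerivWithinAt ξ (ξ' t) (Ici t₀) t)
    (hc : ∀ t, t₀ ≤ t → c * (1 + ξ t ^ 2) ≤ ξ' t) {t : ℝ} (ht : t₀ ≤ t) :
    c * (t - t₀) ≤ arctan (ξ t) - arctan (ξ t₀) := by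
  have hA : ∀ s, t₀ ≤ s → HasDerivWithinAt (fun s => arctan (ξ s) - c * s)
      (ξ' s / (1 + ξ s ^ 2) - c) (Ici t₀) s := fun s hs =>
    ((hξ s hs).arctan).sub ((hasDerivWithinAt_id s _).const_mul c) |>.congr_deriv (by ring)
  have hmono : MonotoneOn (fun s => arctan (ξ s) - c * s) (Ici t₀) := by
    refine monotoneOn_of_hasDerivWithinAt_nonneg (f' := fun s => ξ' s / (1 + ξ s ^ 2) - c)
      (convex_Ici t₀) (fun s hs => (hA s hs).continuousWithinAt) (fun s hs => ?_) (fun s hs => ?_)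
    · rw [interior_Ici] at hs ⊢
      exact (hA s hs.le).mono Ioi_subset_Ici_self
    · rw [interior_Ici] at hs
      have hpos : 0 < 1 + ξ s ^ 2 := by positivity
      rw [sub_nonneg, le_div_iff₀ hpos]
      exact hc s hs.le
  have h : arctan (ξ t₀) - c * t₀ ≤ arctan (ξ t) - c * t := hmono self_mem_Ici ht ht
  linarith

/-- Any solution of `ξ' = η`, `η' = ξ(3η - ξ² - 1)` existing for all `t ≥ 0` must satisfy
`ξ(0)² + 1 - 2η(0) > 0` (otherwise it blows up in finite time). -/
theorem stmt_18 (ξ η : ℝ → ℝ)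
    (hξ : ∀ t : ℝ, 0 ≤ t → HasDerivWithinAt ξ (η t) (Set.Ici 0) t)
    (hη : ∀ t : ℝ, 0 ≤ t →
      HasDerivWithinAt η (ξ t * (3 * η t - (ξ t) ^ 2 - 1)) (Set.Ici 0) t) :
    0 < (ξ 0) ^ 2 + 1 - 2 * η 0 := by
  by_contra! h₀
  have hu : ∀ t, 0 ≤ t → HasDerivWithinAt (fun t => ξ t ^ 2 + 1 - 2 * η t)
      (2 * ξ t * (ξ t ^ 2 + 1 - 2 * η t)) (Ici 0) t := fun t ht =>
    (((hξ t ht).pow 2).add_const 1).sub ((hη t ht).const_mul 2) |>.congr_deriv (by ring)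
  have h2ξ_cont : ContinuousOn (fun t => 2 * ξ t) (Ici 0) :=
    continuousOn_const.mul fun t ht => (hξ t ht).continuousWithinAt
  have hriccati : ∀ t, 0 ≤ t → 1 / 2 * (1 + ξ t ^ 2) ≤ η t := fun t ht => by
    linarith [nonpos_of_hasDerivWithinAt_mul_self h2ξ_cont hu h₀ ht]
  have harctan := mul_sub_le_arctan_sub_arctan hξ hriccati two_pi_pos.le
  linarith [arctan_lt_pi_div_two (ξ (2 * π)), neg_pi_div_two_lt_arctan (ξ 0)]
end

section
/- Let g : ℝ → ℝ be three times differentiable and satisfy g'''(t) − 3g'(t)g''(t) + g'(t) + (g'(t))³ = 0 for all t. Define h(r,t) = (r²/2)·(e^{2g(t)} − 1/4 + g''(t)/2 − (g'(t))²/4), U(r,t) = −(r/2)·g'(t), and V(r,t) = r·(e^{g(t)} − 1/2). Then for all r > 0 and all t ∈ ℝ the triple (h, U, V) satisfies the radially symmetric rotating shallow water system: ∂ₜh + ∂ᵣ(hU) + hU/r = 0, ∂ₜU + U·∂ᵣU + ∂ᵣh − V − V²/r = 0, and ∂ₜV + U·∂ᵣV + U + V·U/r = 0, where ∂ₜ denotes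 the derivative of the function t ↦ (·)(r,t) and ∂ᵣ the derivative of the function r ↦ (·)(r,t). -/
/-!
Every term of the system is homogeneous in `r` for the self-similar ansatz
`h = r² A(t)`, `U = r B(t)`, `V = r W(t)`, so the system collapses to the ODEs
`A' + 4AB = 0`, `B' + B² + 2A - W - W² = 0`, `W' + 2BW + B = 0`. For the profiles
`A = (e^{2g} - 1/4 + g''/2 - g'²/4)/2`, `B = -g'/2`, `W = e^g - 1/2` the last two hold
identically, and `A' + 4AB` is a quarter of the left-hand side of the ODE for `g`.
-/

open Real

section SelfSimilar

variable (A B W : ℝ → ℝ) {a b w t : ℝ} (r : ℝ)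

theorem mass_residual_selfSimilar (hA : HasDerivAt A a t) :
    deriv (fun s => r ^ 2 * A s) t + deriv (fun ρ => ρ ^ 2 * A t * (ρ * B t)) r +
      r ^ 2 * A t * (r * B t) / r = r ^ 2 * (a + 4 * A t * B t) := by
  have hρ := ((hasDerivAt_pow 2 r).mul_const (A t)).fun_mul (hasDerivAt_mul_const (B t))
  have hdiv : r ^ 2 * A t * (r * B t) / r = r ^ 2 * A t * B t := by
    rcases eq_or_ne r 0 with rfl | hr
    · simp
    · field_simp
  rw [(hA.const_mul _).deriv, hρ.deriv, hdiv]
  simp only [Nat.cast_ofNat, Nat.add_one_sub_one, pow_one]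
  ring

theorem radialMomentum_residual_selfSimilar (hB : HasDerivAt B b t) :
    deriv (fun s => r * B s) t + r * B t * deriv (fun ρ => ρ * B t) r +
      deriv (fun ρ => ρ ^ 2 * A t) r - r * W t - (r * W t) ^ 2 / r =
      r * (b + B t ^ 2 + 2 * A t - W t - W t ^ 2) := by
  have hdiv : (r * W t) ^ 2 / r = r * W t ^ 2 := by
    rcases eq_or_ne r 0 with rfl | hr
    · simp
    · field_simp
  rw [(hB.const_mul r).deriv, (hasDerivAt_mul_const (B t)).deriv,
    ((hasDerivAt_pow 2 r).mul_const (A t)).deriv, hdiv]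
  simp only [Nat.cast_ofNat, Nat.add_one_sub_one, pow_one]
  ring

theorem angularMomentum_residual_selfSimilar (hW : HasDerivAt W w t) :
    deriv (fun s => r * W s) t + r * B t * deriv (fun ρ => ρ * W t) r +
      r * B t + r * W t * (r * B t) / r = r * (w + 2 * B t * W t + B t) := by
  have hdiv : r * W t * (r * B t) / r = r * W t * B t := by
    rcases eq_or_ne r 0 with rfl | hr
    · simp
    · field_simp
  rw [(hW.const_mul r).deriv, (hasDerivAt_mul_const (W t)).deriv, hdiv]
  ring

end SelfSimilar

/-- If `g` is three times differentiable with `g''' - 3g'g'' + g' + (g')³ = 0`, then the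
separated-variable triple `h(r,t) = (r²/2)(e^{2g} - 1/4 + g''/2 - (g')²/4)`,
`U(r,t) = -(r/2)g'`, `V(r,t) = r(e^{g} - 1/2)` solves the radially symmetric rotating
shallow water system for all `r > 0` and `t ∈ ℝ`. -/
theorem stmt_19 (g g' g'' g''' : ℝ → ℝ)
    (hg : ∀ t : ℝ, HasDerivAt g (g' t) t)
    (hg' : ∀ t : ℝ, HasDerivAt g' (g'' t) t)
    (hg'' : ∀ t : ℝ, HasDerivAt g'' (g''' t) t)
    (hode : ∀ t : ℝ, g''' t - 3 * g' t * g'' t + g' t + (g' t) ^ 3 = 0)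
    (h U V : ℝ → ℝ → ℝ)
    (hh : ∀ r t : ℝ, h r t =
      r ^ 2 / 2 * (Real.exp (2 * g t) - 1 / 4 + g'' t / 2 - (g' t) ^ 2 / 4))
    (hU : ∀ r t : ℝ, U r t = -(r / 2) * g' t)
    (hV : ∀ r t : ℝ, V r t = r * (Real.exp (g t) - 1 / 2)) :
    ∀ r : ℝ, 0 < r → ∀ t : ℝ,
      deriv (fun s => h r s) t + deriv (fun ρ => h ρ t * U ρ t) r +
          h r t * U r t / r = 0 ∧
      deriv (fun s => U r s) t + U r t * deriv (fun ρ => U ρ t) r +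
          deriv (fun ρ => h ρ t) r - V r t - (V r t) ^ 2 / r = 0 ∧
      deriv (fun s => V r s) t + U r t * deriv (fun ρ => V ρ t) r +
          U r t + V r t * U r t / r = 0 := by
  intro r _ t
  set A : ℝ → ℝ := fun s => (exp (2 * g s) - 1 / 4 + g'' s / 2 - g' s ^ 2 / 4) / 2
  set B : ℝ → ℝ := fun s => -g' s / 2
  set W : ℝ → ℝ := fun s => exp (g s) - 1 / 2
  obtain rfl : h = fun r t => r ^ 2 * A t := funext₂ fun r t => by rw [hh]; ring
  obtain rfl : U = fun r t => r * B t := funext₂ fun r t => by rw [hU]; ring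
  obtain rfl : V = fun r t => r * W t := funext₂ fun r t => hV r t
  have hA := (((((hg t).const_mul 2).exp.sub_const (1 / 4)).add ((hg'' t).div_const 2)).sub
    (((hg' t).pow 2).div_const 4)).div_const 2
  have hB := (hg' t).neg.div_const 2
  have hW := (hg t).exp.sub_const (1 / 2)
  refine ⟨?_, ?_, ?_⟩
  · rw [mass_residual_selfSimilar A B r hA]
    linear_combination (r ^ 2 / 4) * hode t
  · have hexp : exp (2 * g t) = exp (g t) ^ 2 := by rw [← exp_nat_mul]; norm_num
    rw [radialMomentum_residual_selfSimilar A B W r hB]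
    simp only [A, B, W, hexp]
    ring
  · rw [angularMomentum_residual_selfSimilar B W r hW]
    ring
end
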